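/- If T : X → Y is a bounded linear operator between Hilbert spaces and f ∈ ker(T)ᗮ is orthogonal to the kernel of T, then as α → 0⁺ the Tikhonov approximations f_α = (T*T + αI)⁻¹ T* (T f) satisfy ‖f_α‖ ≤ ‖f‖ for all α > 0. -/

import Mathlib

open scoped InnerProductSpace

/-- The regularized normal operator `T*T + αI`. -/
noncomputable def regOp {X Y : Type*} [NormedAddCommGroup X] [InnerProductSpace ℂ X]
    [CompleteSpace X] [NormedAddCommGroup Y] [InnerProductSpace ℂ Y] [CompleteSpace Y]
    (T : X →L[ℂ] Y) (α : ℝ) : X →L[ℂ] X :=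
  (ContinuousLinearMap.adjoint T).comp T + (α : ℂ) • (1 : X →L[ℂ] X)

/-! Write `g = f_α`. The normal equation `T*T g + α g = T*T f` says `α g = T*T (f - g)`, so
`α Re⟪g, f - g⟫ = ‖T (f - g)‖² ≥ 0`; hence `‖g‖² ≤ Re⟪g, f⟫ ≤ ‖g‖ ‖f‖`. -/

open RCLike ContinuousLinearMap

section

variable {𝕜 E F : Type*} [RCLike 𝕜] [NormedAddCommGroup E] [InnerProductSpace 𝕜 E]

theorem norm_le_of_re_inner_sub_nonneg {f g : E} (h : 0 ≤ re ⟪g, f - g⟫_𝕜) : ‖g‖ ≤ ‖f‖ := by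
  have hsq : ‖g‖ ^ 2 ≤ ‖g‖ * ‖f‖ := calc
    ‖g‖ ^ 2 ≤ ‖g‖ ^ 2 + re ⟪g, f - g⟫_𝕜 := le_add_of_nonneg_right h
    _ = re ⟪g, f⟫_𝕜 := by rw [inner_sub_right, map_sub, inner_self_eq_norm_sq]; ring
    _ ≤ ‖g‖ * ‖f‖ := re_inner_le_norm g f
  nlinarith [norm_nonneg g, norm_nonneg f]

variable [NormedAddCommGroup F] [InnerProductSpace 𝕜 F] [CompleteSpace E] [CompleteSpace F]

theorem norm_le_of_adjoint_comp_add_smul_eq (T : E →L[𝕜] F) {α : ℝ} (hα : 0 < α) {f g : E}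
    (h : adjoint T (T g) + (α : 𝕜) • g = adjoint T (T f)) : ‖g‖ ≤ ‖f‖ := by
  have hres : (α : 𝕜) • g = adjoint T (T (f - g)) := by
    rw [map_sub, map_sub, ← h]; abel
  have key : α * re ⟪g, f - g⟫_𝕜 = ‖T (f - g)‖ ^ 2 := by
    rw [← re_ofReal_mul, ← conj_ofReal, ← inner_smul_left, hres, adjoint_inner_left,
      inner_self_eq_norm_sq]
  refine norm_le_of_re_inner_sub_nonneg (𝕜 := 𝕜) ?_
  exact (mul_nonneg_iff_of_pos_left hα).1 (key ▸ sq_nonneg _)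

end

theorem stmt5_general {X Y : Type*} [NormedAddCommGroup X] [InnerProductSpace ℂ X]
    [CompleteSpace X] [NormedAddCommGroup Y] [InnerProductSpace ℂ Y] [CompleteSpace Y]
    (T : X →L[ℂ] Y) (f : X)
    (S : ℝ → X →L[ℂ] X)
    (hS : ∀ α : ℝ, 0 < α → (S α).comp (regOp T α) = 1 ∧ (regOp T α).comp (S α) = 1) :
    ∀ α : ℝ, 0 < α → ‖S α ((ContinuousLinearMap.adjoint T) (T f))‖ ≤ ‖f‖ := by
  intro α hα
  apply norm_le_of_adjoint_comp_add_smul_eq T hα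
  simpa [regOp] using congr($((hS α hα).2) (adjoint T (T f)))

/-- For `f ⟂ ker T`, the Tikhonov approximations `f_α = (T*T + αI)⁻¹ T*(Tf)` satisfy
`‖f_α‖ ≤ ‖f‖` for all `α > 0`. -/
theorem stmt5 {X Y : Type*} [NormedAddCommGroup X] [InnerProductSpace ℂ X]
    [CompleteSpace X] [NormedAddCommGroup Y] [InnerProductSpace ℂ Y] [CompleteSpace Y]
    (T : X →L[ℂ] Y) (f : X) (hf : f ∈ (LinearMap.ker (T : X →ₗ[ℂ] Y))ᗮ)
    (S : ℝ → X →L[ℂ] X)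
    (hS : ∀ α : ℝ, 0 < α → (S α).comp (regOp T α) = 1 ∧ (regOp T α).comp (S α) = 1) :
    ∀ α : ℝ, 0 < α → ‖S α ((ContinuousLinearMap.adjoint T) (T f))‖ ≤ ‖f‖ :=
  stmt5_general T f S hS
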